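/- arXiv:1411.4843 — 2 statements merged into one kernel-verified Lean document; each statement's English description precedes it below -/
import Mathlib

section
/- Let p be a prime, r = pⁿ, and let Γ be a totally ordered abelian group with a valuation ν* on a field K* of residue characteristic p. Suppose z, σ_1(z), …, σ_r(z) ∈ V_{ν*} all have value ν*(z) and pairwise ν*(σ_j(z) − z) > ν*(z). Then for 0 < i < pⁿ, the i-th elementary symmetric polynomial S_i of σ_1(z),…,σ_r(z) satisfies ν*(S_i) > i·ν*(z). -/
/-!
Expanding `S_i = ∑_{|t| = i} (∏_{j ∈ t} σ_j(z) - zⁱ) + C(pⁿ, i)·zⁱ`, every product differs from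
`zⁱ` by an element of value `> i·ν*(z)` (ultrametric inequality, one factor at a time), and
`C(pⁿ, i)` is divisible by `p`, hence lies in the maximal ideal of `V_{ν*}`.
-/

open Finset

theorem Finset.esymm_map_val_eq_sum_sub_add {R ι : Type*} [CommRing R] (s : Finset ι)
    (a : ι → R) (z : R) (i : ℕ) :
    (s.val.map a).esymm i
      = ∑ t ∈ s.powersetCard i, (∏ j ∈ t, a j - z ^ i) + (s.card.choose i : R) * z ^ i := by
  rw [esymm_map_val, sum_sub_distrib, sum_const, card_powersetCard, nsmul_eq_mul, sub_add_cancel]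

namespace Valuation

section CommRing

variable {R Γ₀ : Type*} [CommRing R] [LinearOrderedCommGroupWithZero Γ₀] (v : Valuation R Γ₀)

theorem map_prod_sub_pow_card_lt {ι : Type*} (s : Finset ι) (a : ι → R) (z : R)
    (h : ∀ j ∈ s, v (a j - z) < v z) :
    v (∏ j ∈ s, a j - z ^ s.card) < v z ^ s.card := by
  induction s using Finset.cons_induction with
  | empty => simp
  | cons k s hk ih =>
    have hk_close := h k (mem_cons_self k s)
    have hz : 0 < v z := zero_le.trans_lt hk_close
    have ih := ih fun j hj => h j (mem_cons_of_mem hj)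
    simp only [prod_cons, card_cons, pow_succ']
    calc v (a k * ∏ j ∈ s, a j - z * z ^ s.card)
        = v (a k * (∏ j ∈ s, a j - z ^ s.card) + (a k - z) * z ^ s.card) := by ring_nf
      _ < v z * v z ^ s.card := by
        refine v.map_add_lt ?_ ?_
        · rw [map_mul, v.map_eq_of_sub_lt hk_close]
          exact mul_lt_mul_of_pos_left ih hz
        · rw [map_mul, map_pow]
          exact mul_lt_mul_of_pos_right hk_close (pow_pos hz _)

theorem map_esymm_lt_pow_of_sub_lt {ι : Type*} (s : Finset ι) (a : ι → R) {z : R}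
    (hz : v z ≠ 0) (h : ∀ j ∈ s, v (a j - z) < v z) (i : ℕ)
    (hchoose : v (s.card.choose i : R) < 1) :
    v ((s.val.map a).esymm i) < v z ^ i := by
  rw [s.esymm_map_val_eq_sum_sub_add a z]
  refine v.map_add_lt (v.map_sum_lt (pow_ne_zero i hz) fun t ht => ?_) ?_
  · obtain ⟨hts, rfl⟩ := mem_powersetCard.mp ht
    exact v.map_prod_sub_pow_card_lt t a z fun j hj => h j (hts hj)
  · rw [map_mul, map_pow]
    exact mul_lt_of_lt_one_left (pow_pos (zero_lt_iff.mpr hz) i) hchoose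

end CommRing

theorem map_natCast_lt_one_of_dvd {K Γ₀ : Type*} [Field K] [LinearOrderedCommGroupWithZero Γ₀]
    (v : Valuation K Γ₀) {p : ℕ} [CharP (IsLocalRing.ResidueField v.valuationSubring) p]
    {m : ℕ} (h : p ∣ m) : v m < 1 := by
  have hm : (m : v.valuationSubring) ∈ IsLocalRing.maximalIdeal v.valuationSubring := by
    rw [← IsLocalRing.residue_eq_zero_iff, map_natCast, CharP.cast_eq_zero_iff _ p]
    exact h
  simpa using v.mem_maximalIdeal_iff.mp hm

end Valuation

theorem statement9_general {Kstar : Type*} [Field Kstar]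
    {Γ₀ : Type*} [LinearOrderedCommGroupWithZero Γ₀]
    (vstar : Valuation Kstar Γ₀)
    (p n : ℕ) (hp : p.Prime)
    -- the residue characteristic of `V_{ν*}` is `p`
    (hresp : CharP (IsLocalRing.ResidueField ↥vstar.valuationSubring) p)
    (z : Kstar)
    (a : Fin (p ^ n) → Kstar)
    -- `ν*(σ_j(z) − z) > ν*(z)`
    (hclose : ∀ j, vstar (a j - z) < vstar z) :
    ∀ i : ℕ, 0 < i → i < p ^ n →
      vstar ((Multiset.map a Finset.univ.val).esymm i) < (vstar z) ^ i := by
  intro i hi0 hi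
  have hz : vstar z ≠ 0 := (zero_le.trans_lt (hclose ⟨0, by omega⟩)).ne'
  refine vstar.map_esymm_lt_pow_of_sub_lt univ a hz (fun j _ => hclose j) i ?_
  simpa using vstar.map_natCast_lt_one_of_dvd (hp.dvd_choose_pow hi0.ne' hi.ne)

/-- Let `p` be a prime, `r = pⁿ`, and `ν*` a valuation on a field `K*`
of residue characteristic `p`.  Suppose `z, σ_1(z), …, σ_r(z) ∈ V_{ν*}` all have value
`ν*(z)` and `ν*(σ_j(z) − z) > ν*(z)` for each `j`.  Then for `0 < i < pⁿ` the `i`-th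
elementary symmetric polynomial `S_i` of `σ_1(z), …, σ_r(z)` satisfies
`ν*(S_i) > i·ν*(z)`.  (Multiplicative notation: `ν(x) > γ` is `v x < γ`.) -/
theorem statement9 {Kstar : Type*} [Field Kstar]
    {Γ₀ : Type*} [LinearOrderedCommGroupWithZero Γ₀]
    (vstar : Valuation Kstar Γ₀)
    (p n : ℕ) (hp : p.Prime)
    -- the residue characteristic of `V_{ν*}` is `p`
    (hresp : CharP (IsLocalRing.ResidueField ↥vstar.valuationSubring) p)
    (z : Kstar) (hz0 : z ≠ 0) (hzV : vstar z ≤ 1)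
    (a : Fin (p ^ n) → Kstar)
    (haV : ∀ j, vstar (a j) ≤ 1)
    -- each `σ_j(z)` has the same value as `z`
    (hva : ∀ j, vstar (a j) = vstar z)
    -- `ν*(σ_j(z) − z) > ν*(z)`
    (hclose : ∀ j, vstar (a j - z) < vstar z) :
    ∀ i : ℕ, 0 < i → i < p ^ n →
      vstar ((Multiset.map a Finset.univ.val).esymm i) < (vstar z) ^ i :=
  statement9_general vstar p n hp hresp z a hclose
end

section
/- Let k be a commutative ring, M a finitely generated submonoid of ℤⁿ_{≥0} (so that k[M] ⊆ k[z_1,…,z_n]), and M̃ = {v ∈ ℤⁿ | mv ∈ M for some m ∈ ℤ_{>0}} ∩ ℤⁿ_{≥0} the saturation of M inside ℤⁿ_{≥0}. If k is an integrally closed domain, then k[z^v | v ∈ M̃] is the integral closure of k[z^v | v ∈ M] in k[z_1,…,z_n]. -/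
/-!
A monomial `z^v` with `m • v ∈ M` is a root of `T^m - z^(m • v)`, so `k[M̃]` is integral over
`k[M]`. Conversely, let `x` be integral over `k[M]` and let `y` be a rational weight that is
nonnegative on `M`. If some monomial of `x` had negative weight, let `s < 0` be the least weight
and `x₀ ≠ 0` the part of `x` of weight `s`. Since `k` is a domain, `x₀ ^ N ≠ 0` is the part of
`x ^ N` of weight `N • s`; but an integral equation writes `x ^ N` as a `k[M]`-combination of
`x ^ i`, `i < N`, all of whose monomials have weight `≥ i • s > N • s`. So every exponent of `x`
has nonnegative weight for every such `y`, and Farkas' lemma for the cone spanned by the finitely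
many generators of `M` puts a positive multiple of it into `M`.
-/

open MvPolynomial Finsupp Matrix Pointwise

theorem Polynomial.Monic.pow_natDegree_eq_neg_sum {S B : Type*} [CommRing S] [CommRing B]
    [Algebra S B] {p : Polynomial S} (hp : p.Monic) {x : B} (hpx : Polynomial.aeval x p = 0) :
    x ^ p.natDegree = -∑ i ∈ Finset.range p.natDegree, algebraMap S B (p.coeff i) * x ^ i := by
  rw [hp.as_sum] at hpx
  simpa [eq_neg_iff_add_eq_zero] using hpx

namespace MvPolynomial

variable {R σ Γ : Type*}

section Support

variable [CommSemiring R]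

theorem mul_mem_restrictSupport {s t u : Set (σ →₀ ℕ)} (hstu : s + t ⊆ u)
    {f g : MvPolynomial σ R} (hf : f ∈ restrictSupport R s) (hg : g ∈ restrictSupport R t) :
    f * g ∈ restrictSupport R u := by
  classical
  intro d hd
  obtain ⟨p, hp, q, hq, rfl⟩ := Finset.mem_add.mp (support_mul f g hd)
  exact hstu (Set.add_mem_add (hf hp) (hg hq))

/-- The monoid algebra `R[M]` of a submonoid `M` of the exponent monoid. -/
noncomputable def monoidSubalgebra (M : AddSubmonoid (σ →₀ ℕ)) : Subalgebra R (MvPolynomial σ R) :=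
  (restrictSupport R M).toSubalgebra
    (by rw [one_def, monomial_mem_restrictSupport]; exact .inl M.zero_mem)
    fun _ _ => mul_mem_restrictSupport (Set.add_subset_iff.mpr fun _ hp _ hq => M.add_mem hp hq)

theorem adjoin_monomial_eq_monoidSubalgebra (M : AddSubmonoid (σ →₀ ℕ)) :
    Algebra.adjoin R ((monomial · (1 : R)) '' (M : Set (σ →₀ ℕ))) = monoidSubalgebra M := by
  refine le_antisymm (Algebra.adjoin_le ?_) ?_
  · rintro _ ⟨v, hv, rfl⟩
    simp [monoidSubalgebra, hv]
  · have := Algebra.span_le_adjoin R ((monomial · (1 : R)) '' (M : Set (σ →₀ ℕ)))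
    rwa [← restrictSupport_eq_span] at this

theorem restrictSupport_le_adjoin_monomial (s : Set (σ →₀ ℕ)) :
    restrictSupport R s ≤ Subalgebra.toSubmodule (Algebra.adjoin R ((monomial · (1 : R)) '' s)) :=
  restrictSupport_eq_span R s ▸ Algebra.span_le_adjoin R _

end Support

theorem adjoin_monomial_le_integralClosure [CommRing R] {M : AddSubmonoid (σ →₀ ℕ)}
    {s : Set (σ →₀ ℕ)} (hs : ∀ v ∈ s, ∃ m : ℕ, 0 < m ∧ m • v ∈ M) :
    Algebra.adjoin R ((monomial · (1 : R)) '' s) ≤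
      (integralClosure (monoidSubalgebra (R := R) M) (MvPolynomial σ R)).restrictScalars R := by
  refine Algebra.adjoin_le ?_
  rintro _ ⟨v, hv, rfl⟩
  obtain ⟨m, hm, hmv⟩ := hs v hv
  have hpow : monomial v (1 : R) ^ m ∈ monoidSubalgebra M := by
    rw [monomial_pow, one_pow]
    exact (monomial_mem_restrictSupport R).mpr (.inl hmv)
  exact IsIntegral.of_pow hm (isIntegral_algebraMap (x := (⟨_, hpow⟩ : monoidSubalgebra M)))

section Weight

variable [AddCommMonoid Γ] [LinearOrder Γ] {w : σ → Γ} {a b : Γ}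

section Semiring

variable [CommSemiring R] {f g : MvPolynomial σ R}

theorem weightedHomogeneousComponent_mem_restrictSupport_weight_le :
    weightedHomogeneousComponent w a f ∈ restrictSupport R {d | a ≤ weight w d} := by
  classical
  rw [mem_restrictSupport_iff, support_weightedHomogeneousComponent]
  exact fun d hd => (Finset.mem_filter.mp hd).2.ge

theorem weightedHomogeneousComponent_eq_zero_of_mem_restrictSupport_weight_lt
    (hf : f ∈ restrictSupport R {d | a < weight w d}) : weightedHomogeneousComponent w a f = 0 :=
  weightedHomogeneousComponent_eq_zero' _ _ fun _ hd => (hf hd).ne'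

variable [IsOrderedCancelAddMonoid Γ]

theorem mul_mem_restrictSupport_weight_le (hf : f ∈ restrictSupport R {d | a ≤ weight w d})
    (hg : g ∈ restrictSupport R {d | b ≤ weight w d}) :
    f * g ∈ restrictSupport R {d | a + b ≤ weight w d} :=
  mul_mem_restrictSupport (Set.add_subset_iff.mpr fun p hp q hq => by
    simpa only [Set.mem_ofPred_eq, map_add] using add_le_add hp hq) hf hg

theorem mul_mem_restrictSupport_weight_lt_left (hf : f ∈ restrictSupport R {d | a < weight w d})
    (hg : g ∈ restrictSupport R {d | b ≤ weight w d}) :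
    f * g ∈ restrictSupport R {d | a + b < weight w d} :=
  mul_mem_restrictSupport (Set.add_subset_iff.mpr fun p hp q hq => by
    simpa only [Set.mem_ofPred_eq, map_add] using add_lt_add_of_lt_of_le hp hq) hf hg

theorem mul_mem_restrictSupport_weight_lt_right (hf : f ∈ restrictSupport R {d | a ≤ weight w d})
    (hg : g ∈ restrictSupport R {d | b < weight w d}) :
    f * g ∈ restrictSupport R {d | a + b < weight w d} :=
  mul_mem_restrictSupport (Set.add_subset_iff.mpr fun p hp q hq => by
    simpa only [Set.mem_ofPred_eq, map_add] using add_lt_add_of_le_of_lt hp hq) hf hg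

theorem pow_mem_restrictSupport_weight_le (hf : f ∈ restrictSupport R {d | a ≤ weight w d})
    (m : ℕ) : f ^ m ∈ restrictSupport R {d | m • a ≤ weight w d} := by
  induction m with
  | zero => rw [pow_zero, one_def, zero_nsmul, monomial_mem_restrictSupport]; simp
  | succ m ih => simpa only [pow_succ, succ_nsmul] using mul_mem_restrictSupport_weight_le ih hf

end Semiring

section Ring

variable [CommRing R] {f g : MvPolynomial σ R}

theorem sub_weightedHomogeneousComponent_mem_restrictSupport_weight_lt
    (hf : f ∈ restrictSupport R {d | a ≤ weight w d}) :
    f - weightedHomogeneousComponent w a f ∈ restrictSupport R {d | a < weight w d} := by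
  classical
  rw [mem_restrictSupport_iff]
  intro d hd
  rw [Finset.mem_coe, mem_support_iff, coeff_sub, coeff_weightedHomogeneousComponent] at hd
  split_ifs at hd with hda
  · exact absurd (sub_self _) hd
  · exact (hf (mem_support_iff.mpr (by simpa using hd))).lt_of_ne' hda

variable [IsOrderedCancelAddMonoid Γ]

theorem weightedHomogeneousComponent_mul_of_mem_restrictSupport
    (hf : f ∈ restrictSupport R {d | a ≤ weight w d})
    (hg : g ∈ restrictSupport R {d | b ≤ weight w d}) :
    weightedHomogeneousComponent w (a + b) (f * g) =
      weightedHomogeneousComponent w a f * weightedHomogeneousComponent w b g := by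
  set f₀ := weightedHomogeneousComponent w a f
  set g₀ := weightedHomogeneousComponent w b g
  have hfg : f * g = f₀ * g₀ + (f₀ * (g - g₀) + (f - f₀) * g) := by ring
  have hhigh : f₀ * (g - g₀) + (f - f₀) * g ∈ restrictSupport R {d | a + b < weight w d} :=
    add_mem
      (mul_mem_restrictSupport_weight_lt_right
        weightedHomogeneousComponent_mem_restrictSupport_weight_le
        (sub_weightedHomogeneousComponent_mem_restrictSupport_weight_lt hg))
      (mul_mem_restrictSupport_weight_lt_left
        (sub_weightedHomogeneousComponent_mem_restrictSupport_weight_lt hf) hg)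
  rw [hfg, map_add, weightedHomogeneousComponent_eq_zero_of_mem_restrictSupport_weight_lt hhigh,
    add_zero, weightedHomogeneousComponent_eq_self
      ((weightedHomogeneousComponent_isWeightedHomogeneous a f).mul
        (weightedHomogeneousComponent_isWeightedHomogeneous b g))]

theorem weightedHomogeneousComponent_pow_of_mem_restrictSupport
    (hf : f ∈ restrictSupport R {d | a ≤ weight w d}) (m : ℕ) :
    weightedHomogeneousComponent w (m • a) (f ^ m) = weightedHomogeneousComponent w a f ^ m := by
  induction m with
  | zero =>
    rw [pow_zero, pow_zero, zero_nsmul]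
    exact weightedHomogeneousComponent_eq_self (isWeightedHomogeneous_one R w)
  | succ m ih =>
    rw [pow_succ, pow_succ, succ_nsmul, weightedHomogeneousComponent_mul_of_mem_restrictSupport
      (pow_mem_restrictSupport_weight_le hf m) hf, ih]

end Ring

end Weight

section Integral

variable [CommRing R] [IsDomain R] [AddCommGroup Γ] [LinearOrder Γ] [IsOrderedAddMonoid Γ]
  {w : σ → Γ}

theorem mem_restrictSupport_weight_nonneg_of_isIntegral {A : Subalgebra R (MvPolynomial σ R)}
    (hA : Subalgebra.toSubmodule A ≤ restrictSupport R {d | 0 ≤ weight w d})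
    {x : MvPolynomial σ R} (hx : IsIntegral A x) : x ∈ restrictSupport R {d | 0 ≤ weight w d} := by
  classical
  by_contra hneg
  obtain ⟨u, hu, hwu⟩ := Set.not_subset.mp hneg
  obtain ⟨u₀, hu₀, hmin⟩ := x.support.exists_min_image (weight w) ⟨u, hu⟩
  set s := weight w u₀
  have hs : s < 0 := (hmin u hu).trans_lt (not_le.mp hwu)
  have hxs : x ∈ restrictSupport R {d | s ≤ weight w d} := fun d hd => hmin d hd
  have hx₀ : weightedHomogeneousComponent w s x ≠ 0 := fun h => by
    have := congr_arg (coeff u₀) h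
    rw [coeff_weightedHomogeneousComponent, if_pos rfl, coeff_zero] at this
    exact mem_support_iff.mp hu₀ this
  obtain ⟨p, hp, hpx⟩ := hx
  have hpow : x ^ p.natDegree ∈ restrictSupport R {d | p.natDegree • s < weight w d} := by
    rw [hp.pow_natDegree_eq_neg_sum hpx]
    refine neg_mem (Submodule.sum_mem _ fun i hi => ?_)
    have hterm := mul_mem_restrictSupport_weight_le (hA (p.coeff i).2)
      (pow_mem_restrictSupport_weight_le hxs i)
    refine restrictSupport_mono R (fun d hd => ?_) hterm
    have hi : i • s > p.natDegree • s := by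
      simpa using nsmul_lt_nsmul_left (neg_pos.mpr hs) (Finset.mem_range.mp hi)
    exact hi.trans_le (by simpa using hd)
  exact pow_ne_zero p.natDegree hx₀ <|
    (weightedHomogeneousComponent_pow_of_mem_restrictSupport hxs _).symm.trans
      (weightedHomogeneousComponent_eq_zero_of_mem_restrictSupport_weight_lt hpow)

end Integral

end MvPolynomial

theorem Finset.sum_insert_update_smul {ι R V : Type*} [Semiring R] [AddCommMonoid V] [Module R V]
    [DecidableEq ι] {s : Finset ι} {a : ι} (ha : a ∉ s) (c : ι → R) (t : R) (w : ι → V) :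
    ∑ i ∈ insert a s, Function.update c a t i • w i = t • w a + ∑ i ∈ s, c i • w i := by
  rw [Finset.sum_insert ha, Function.update_self]
  congr 1
  exact Finset.sum_congr rfl fun i hi => by rw [Function.update_of_ne (ne_of_mem_of_not_mem hi ha)]

section Farkas

variable {𝕜 κ : Type*} [Field 𝕜] [Fintype κ]

/-- The projection onto the hyperplane `y⊥` along `a`. -/
def projAlong (a y u : κ → 𝕜) : κ → 𝕜 := u - ((u ⬝ᵥ y) / (a ⬝ᵥ y)) • a

theorem projAlong_dotProduct (a y u z : κ → 𝕜) :
    projAlong a y u ⬝ᵥ z = u ⬝ᵥ projAlong y a z := by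
  simp only [projAlong, sub_dotProduct, dotProduct_sub, smul_dotProduct, dotProduct_smul,
    smul_eq_mul, dotProduct_comm z, dotProduct_comm y a]
  ring

theorem projAlong_dotProduct_self {a y : κ → 𝕜} (h : a ⬝ᵥ y ≠ 0) (u : κ → 𝕜) :
    projAlong a y u ⬝ᵥ y = 0 := by
  rw [projAlong, sub_dotProduct, smul_dotProduct, smul_eq_mul, div_mul_cancel₀ _ h, sub_self]

variable [LinearOrder 𝕜] [IsStrictOrderedRing 𝕜]

theorem exists_nonneg_smul_add_sum_eq_of_projAlong {ι : Type*} {s : Finset ι} {a y v : κ → 𝕜}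
    {w : ι → κ → 𝕜} (hay : a ⬝ᵥ y < 0) (hwy : ∀ i ∈ s, 0 ≤ w i ⬝ᵥ y) (hvy : v ⬝ᵥ y < 0)
    {c : ι → 𝕜} (hc : ∀ i ∈ s, 0 ≤ c i)
    (hcv : ∑ i ∈ s, c i • projAlong a y (w i) = projAlong a y v) :
    ∃ t : 𝕜, 0 ≤ t ∧ t • a + ∑ i ∈ s, c i • w i = v := by
  set S := ∑ i ∈ s, c i * (w i ⬝ᵥ y / a ⬝ᵥ y)
  have hS : S ≤ 0 := Finset.sum_nonpos fun i hi =>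
    mul_nonpos_of_nonneg_of_nonpos (hc i hi) (div_nonpos_of_nonneg_of_nonpos (hwy i hi) hay.le)
  have hsum : ∑ i ∈ s, c i • w i = projAlong a y v + S • a := by
    rw [← hcv]
    simp only [S, projAlong, smul_sub, Finset.sum_sub_distrib, smul_smul, ← Finset.sum_smul]
    abel
  refine ⟨v ⬝ᵥ y / a ⬝ᵥ y - S, sub_nonneg.mpr (hS.trans (div_pos_of_neg_of_neg hvy hay).le), ?_⟩
  rw [hsum, projAlong]
  module

/-- Farkas' lemma for a finite family of vectors. -/
theorem exists_nonneg_sum_smul_eq_or_exists_dotProduct_neg {ι : Type*} [DecidableEq ι]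
    (s : Finset ι) (w : ι → κ → 𝕜) (v : κ → 𝕜) :
    (∃ c : ι → 𝕜, (∀ i ∈ s, 0 ≤ c i) ∧ ∑ i ∈ s, c i • w i = v) ∨
      ∃ y : κ → 𝕜, (∀ i ∈ s, 0 ≤ w i ⬝ᵥ y) ∧ v ⬝ᵥ y < 0 := by
  induction s using Finset.induction_on generalizing w v with
  | empty =>
    by_cases hv : v = 0
    · exact .inl ⟨0, by simp, by simp [hv]⟩
    · refine .inr ⟨-v, by simp, ?_⟩
      rw [dotProduct_neg, neg_neg_iff_pos]
      exact (Finset.sum_nonneg fun i _ => mul_self_nonneg (v i)).lt_of_ne'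
        (mt dotProduct_self_eq_zero.mp hv)
  | insert a s ha ih =>
    have hupdate {c : ι → 𝕜} {t : 𝕜} (hc : ∀ i ∈ s, 0 ≤ c i) (ht : 0 ≤ t) :
        ∀ i ∈ insert a s, 0 ≤ Function.update c a t i := by
      intro i hi
      rcases eq_or_ne i a with rfl | hia
      · simpa
      · rw [Function.update_of_ne hia]; exact hc i (Finset.mem_of_mem_insert_of_ne hi hia)
    rcases ih w v with ⟨c, hc, hcv⟩ | ⟨y, hy, hvy⟩
    · refine .inl ⟨Function.update c a 0, hupdate hc le_rfl, ?_⟩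
      rw [Finset.sum_insert_update_smul ha, zero_smul, zero_add, hcv]
    by_cases hwa : 0 ≤ w a ⬝ᵥ y
    · exact .inr ⟨y, Finset.forall_mem_insert .. |>.mpr ⟨hwa, hy⟩, hvy⟩
    rw [not_le] at hwa
    -- Fourier–Motzkin step: eliminate `w a` by projecting everything onto `y⊥` along it.
    rcases ih (fun i => projAlong (w a) y (w i)) (projAlong (w a) y v) with
      ⟨c, hc, hcv⟩ | ⟨z, hz, hvz⟩
    · obtain ⟨t, ht, htv⟩ := exists_nonneg_smul_add_sum_eq_of_projAlong hwa hy hvy hc hcv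
      exact .inl ⟨Function.update c a t, hupdate hc ht, by rwa [Finset.sum_insert_update_smul ha]⟩
    · have hwaz : 0 ≤ w a ⬝ᵥ projAlong y (w a) z := by
        rw [dotProduct_comm, projAlong_dotProduct_self (by rw [dotProduct_comm]; exact hwa.ne)]
      refine .inr ⟨projAlong y (w a) z,
        Finset.forall_mem_insert .. |>.mpr ⟨hwaz, fun i hi => ?_⟩, ?_⟩
      · rw [← projAlong_dotProduct]; exact hz i hi
      · rwa [← projAlong_dotProduct]

end Farkas

theorem Finset.exists_pos_nat_mul_eq_natCast {ι : Type*} (s : Finset ι) {c : ι → ℚ}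
    (hc : ∀ i ∈ s, 0 ≤ c i) : ∃ D : ℕ, 0 < D ∧ ∀ i ∈ s, ∃ d : ℕ, (d : ℚ) = D * c i := by
  refine ⟨∏ i ∈ s, (c i).den, Finset.prod_pos fun i _ => (c i).den_pos, fun i hi => ?_⟩
  obtain ⟨k, hk⟩ := Finset.dvd_prod_of_mem (fun i => (c i).den) hi
  refine ⟨k * (c i).num.toNat, ?_⟩
  have hnum : (((c i).num.toNat : ℤ) : ℚ) = (c i).num := by
    rw [Int.toNat_of_nonneg (Rat.num_nonneg.mpr (hc i hi))]
  rw [hk]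
  push_cast at hnum ⊢
  rw [hnum]
  linear_combination (-(k : ℚ)) * Rat.mul_den_eq_num (c i)

theorem Finsupp.weight_eq_dotProduct {σ : Type*} [Fintype σ] (y : σ → ℚ) (u : σ →₀ ℕ) :
    weight y u = (fun i => (u i : ℚ)) ⬝ᵥ y := by
  simp [weight_apply, Finsupp.sum_fintype, dotProduct, nsmul_eq_mul]

theorem AddSubmonoid.FG.exists_nsmul_mem_of_weight_nonneg {σ : Type*} [Fintype σ]
    {M : AddSubmonoid (σ →₀ ℕ)} (hM : M.FG) {v : σ →₀ ℕ}
    (hv : ∀ y : σ → ℚ, (∀ u ∈ M, 0 ≤ weight y u) → 0 ≤ weight y v) :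
    ∃ m : ℕ, 0 < m ∧ m • v ∈ M := by
  classical
  obtain ⟨F, rfl⟩ := hM
  rcases exists_nonneg_sum_smul_eq_or_exists_dotProduct_neg F (fun u i => (u i : ℚ))
      (fun i => (v i : ℚ)) with ⟨c, hc, hcv⟩ | ⟨y, hy, hvy⟩
  · obtain ⟨D, hD, hd⟩ := F.exists_pos_nat_mul_eq_natCast hc
    choose! d hd using hd
    refine ⟨D, hD, ?_⟩
    have hDv : D • v = ∑ u ∈ F, d u • u := by
      ext i
      have := congr_arg (fun f => (D : ℚ) * f i) hcv
      simp only [Finset.sum_apply, Pi.smul_apply, smul_eq_mul, Finset.mul_sum, ← mul_assoc] at this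
      rw [Finset.sum_congr rfl fun u hu => by rw [← hd u hu]] at this
      simp only [Finsupp.smul_apply, Finsupp.finsetSum_apply, smul_eq_mul]
      exact_mod_cast this.symm
    rw [hDv]
    exact AddSubmonoid.sum_mem _ fun u hu =>
      AddSubmonoid.nsmul_mem _ (AddSubmonoid.subset_closure hu) _
  · have hyM : ∀ u ∈ AddSubmonoid.closure (F : Set (σ →₀ ℕ)), 0 ≤ weight y u := by
      intro u hu
      induction hu using AddSubmonoid.closure_induction with
      | mem u hu => rw [weight_eq_dotProduct]; exact hy u hu
      | zero => simp
      | add u u' _ _ hu hu' => rw [map_add]; exact add_nonneg hu hu'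
    exact absurd (hv y hyM) (by rw [weight_eq_dotProduct]; exact not_le.mpr hvy)

theorem statement11_general (k : Type*) [CommRing k] [IsDomain k]
    (n : ℕ) (M : AddSubmonoid (Fin n →₀ ℕ)) (hfg : M.FG)
    (Msat : Set (Fin n →₀ ℕ)) (hMsat : Msat = {v | ∃ m : ℕ, 0 < m ∧ m • v ∈ M})
    (A : Subalgebra k (MvPolynomial (Fin n) k))
    (hA : A = Algebra.adjoin k ((fun v => MvPolynomial.monomial v (1 : k)) '' (M : Set (Fin n →₀ ℕ))))
    (Asat : Subalgebra k (MvPolynomial (Fin n) k))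
    (hAsat : Asat = Algebra.adjoin k ((fun v => MvPolynomial.monomial v (1 : k)) '' Msat)) :
    ∀ x : MvPolynomial (Fin n) k, x ∈ Asat ↔ IsIntegral ↥A x := by
  rw [adjoin_monomial_eq_monoidSubalgebra] at hA
  subst hMsat hA hAsat
  intro x
  refine ⟨fun hx => adjoin_monomial_le_integralClosure (fun v hv => hv) hx, fun hx => ?_⟩
  refine restrictSupport_le_adjoin_monomial _ fun v hv =>
    hfg.exists_nsmul_mem_of_weight_nonneg fun y hy => ?_
  exact mem_restrictSupport_weight_nonneg_of_isIntegral (w := y)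
    (restrictSupport_mono k hy) hx hv

/-- Bruns–Gubeladze, Lemma 4.40.  Let `k` be an integrally closed
domain, `M` a finitely generated submonoid of `ℤⁿ_{≥0}` and
`M̃ = {v | mv ∈ M for some m > 0}` its saturation inside `ℤⁿ_{≥0}`.  Then
`k[z^v | v ∈ M̃]` is the integral closure of `k[z^v | v ∈ M]` in `k[z_1,…,z_n]`:
an element of the polynomial ring lies in `k[z^v | v ∈ M̃]` if and only if it is
integral over `k[z^v | v ∈ M]`. -/
theorem statement11 (k : Type*) [CommRing k] [IsDomain k] [IsIntegrallyClosed k]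
    (n : ℕ) (M : AddSubmonoid (Fin n →₀ ℕ)) (hfg : M.FG)
    (Msat : Set (Fin n →₀ ℕ)) (hMsat : Msat = {v | ∃ m : ℕ, 0 < m ∧ m • v ∈ M})
    (A : Subalgebra k (MvPolynomial (Fin n) k))
    (hA : A = Algebra.adjoin k ((fun v => MvPolynomial.monomial v (1 : k)) '' (M : Set (Fin n →₀ ℕ))))
    (Asat : Subalgebra k (MvPolynomial (Fin n) k))
    (hAsat : Asat = Algebra.adjoin k ((fun v => MvPolynomial.monomial v (1 : k)) '' Msat)) :
    ∀ x : MvPolynomial (Fin n) k, x ∈ Asat ↔ IsIntegral ↥A x :=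
  statement11_general k n M hfg Msat hMsat A hA Asat hAsat
end
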